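/- Let X be a real normed linear space, a ≠ 0, and x₁,…,xₙ nonzero vectors with ‖a‖ ≥ ‖xⱼ − a‖ for each j. Then for pⱼ ≥ 0 with Σpⱼ = 1 and Σpⱼ‖xⱼ‖ > 0: ‖Σⱼ pⱼ•xⱼ‖/(Σⱼ pⱼ‖xⱼ‖) ≥ min_{1≤j≤n} (‖a‖ − ‖xⱼ − a‖)/‖xⱼ‖. -/

import Mathlib

/-!
Take a functional `f` of norm at most one with `f a = ‖a‖` (Hahn–Banach). Then
`f xⱼ = ‖a‖ - f (a - xⱼ) ≥ ‖a‖ - ‖xⱼ - a‖ ≥ m ‖xⱼ‖`, where `m` is the minimum on the right-hand side,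
and summing against the nonnegative weights `pⱼ` gives `m Σ pⱼ ‖xⱼ‖ ≤ f (Σ pⱼ xⱼ) ≤ ‖Σ pⱼ xⱼ‖`.
-/

open Finset

lemma mul_norm_le_of_le_div_norm {X : Type*} [NormedAddCommGroup X] {m : ℝ} {a x : X}
    (h : m ≤ (‖a‖ - ‖x - a‖) / ‖x‖) : m * ‖x‖ ≤ ‖a‖ - ‖x - a‖ := by
  rcases eq_or_ne x 0 with rfl | hx
  · simp
  · exact (le_div_iff₀ (norm_pos_iff.mpr hx)).mp h

section

variable {X : Type*} [NormedAddCommGroup X] [NormedSpace ℝ X]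

lemma StrongDual.apply_le_norm_of_norm_le_one {f : StrongDual ℝ X} (hf : ‖f‖ ≤ 1) (x : X) :
    f x ≤ ‖x‖ :=
  (Real.le_norm_self _).trans ((f.le_of_opNorm_le hf x).trans_eq (one_mul _))

lemma StrongDual.norm_sub_norm_sub_le_apply {f : StrongDual ℝ X} (hf : ‖f‖ ≤ 1) {a : X}
    (hfa : f a = ‖a‖) (x : X) : ‖a‖ - ‖x - a‖ ≤ f x := by
  have h := f.apply_le_norm_of_norm_le_one hf (a - x)
  rw [map_sub, hfa, norm_sub_rev] at h
  linarith

theorem mul_sum_norm_le_norm_sum {ι : Type*} (s : Finset ι) (x : ι → X) (a : X)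
    {p : ι → ℝ} (hp : ∀ j ∈ s, 0 ≤ p j) {m : ℝ}
    (hm : ∀ j ∈ s, m * ‖x j‖ ≤ ‖a‖ - ‖x j - a‖) :
    m * ∑ j ∈ s, p j * ‖x j‖ ≤ ‖∑ j ∈ s, p j • x j‖ := by
  obtain ⟨f, hf, hfa⟩ := exists_dual_vector'' ℝ a
  calc m * ∑ j ∈ s, p j * ‖x j‖ = ∑ j ∈ s, p j * (m * ‖x j‖) := by
        rw [mul_sum]; exact sum_congr rfl fun j _ => by ring
    _ ≤ ∑ j ∈ s, p j * f (x j) := sum_le_sum fun j hj =>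
        mul_le_mul_of_nonneg_left ((hm j hj).trans (f.norm_sub_norm_sub_le_apply hf hfa _))
          (hp j hj)
    _ = f (∑ j ∈ s, p j • x j) := by simp only [map_sum, map_smul, smul_eq_mul]
    _ ≤ ‖∑ j ∈ s, p j • x j‖ := f.apply_le_norm_of_norm_le_one hf _

end

theorem stmt16_general {X : Type*} [NormedAddCommGroup X] [NormedSpace ℝ X]
    (n : ℕ) (hn : 0 < n) (x : Fin n → X)
    (a : X)
    (p : Fin n → ℝ) (hp : ∀ j, 0 ≤ p j)
    (hpos : 0 < ∑ j, p j * ‖x j‖) :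
    ‖∑ j, p j • x j‖ / (∑ j, p j * ‖x j‖) ≥
      Finset.univ.inf' (Finset.univ_nonempty_iff.mpr ⟨⟨0, hn⟩⟩)
        (fun j => (‖a‖ - ‖x j - a‖) / ‖x j‖) := by
  rw [ge_iff_le, le_div_iff₀ hpos]
  exact mul_sum_norm_le_norm_sum _ x a (fun j _ => hp j) fun j _ =>
    mul_norm_le_of_le_div_norm (inf'_le _ (mem_univ j))

theorem stmt16 {X : Type*} [NormedAddCommGroup X] [NormedSpace ℝ X]
    (n : ℕ) (hn : 0 < n) (x : Fin n → X) (hx0 : ∀ j, x j ≠ 0)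
    (a : X) (ha : a ≠ 0) (hx : ∀ j, ‖x j - a‖ ≤ ‖a‖)
    (p : Fin n → ℝ) (hp : ∀ j, 0 ≤ p j) (hp1 : ∑ j, p j = 1)
    (hpos : 0 < ∑ j, p j * ‖x j‖) :
    ‖∑ j, p j • x j‖ / (∑ j, p j * ‖x j‖) ≥
      Finset.univ.inf' (Finset.univ_nonempty_iff.mpr ⟨⟨0, hn⟩⟩)
        (fun j => (‖a‖ - ‖x j - a‖) / ‖x j‖) :=
  stmt16_general n hn x a p hp hpos
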